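/- Let i, j ∈ V with i ≠ j and set N = Σ_{e ∈ E with γ e i ≠ 0} |γ e j|. Then (σ_i − id)^{N+1}(t_j) = 0 and (σ_i − id)^{N}(t_j) ≠ 0, where σ_i − id is the K-linear endomorphism of R_E given by p ↦ σ_i(p) − p. (Equivalently, the minimal polynomial of σ_i acting on the span of {σ_i^k(t_j) : k ∈ ℤ} is (x − 1)^{N+1}.) -/
import Mathlib


open MvPolynomial

/-- The defining property of the incidence matrix of a multiquiver: every row has
at most one positive and at most one negative entry. -/
def CondM {V E : Type*} (γ : E → V → ℤ) : Prop :=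
  ∀ e : E, (∀ v w : V, 0 < γ e v → 0 < γ e w → v = w) ∧
    (∀ v w : V, γ e v < 0 → γ e w < 0 → v = w)

/-- `u_{ev} = u_e(u_e+1)⋯(u_e+c−1)` if `c = γ e v > 0`,
`(u_e−1)(u_e−2)⋯(u_e−|c|)` if `c < 0`, and `1` if `c = 0`. -/
noncomputable def uev (K : Type*) [Field K] {E : Type*} (e : E) (c : ℤ) :
    MvPolynomial E K :=
  if 0 < c then ∏ k ∈ Finset.range c.toNat, (X e + C (k : K))
  else ∏ m ∈ Finset.range (-c).toNat, (X e - C ((m : K) + 1))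

/-- `t_v = ∏_{e∈E} u_{ev}`. -/
noncomputable def tGamma (K : Type*) [Field K] {V E : Type*} [Fintype E]
    (γ : E → V → ℤ) (v : V) : MvPolynomial E K :=
  ∏ e : E, uev K e (γ e v)

namespace TGWAux

/-! ### The finite difference operator on univariate polynomials -/

variable {R : Type*} [CommRing R]

/-- Finite difference operator on polynomials: `Q(X+1) - Q(X)`. -/
noncomputable def delta (Q : Polynomial R) : Polynomial R :=
  Q.comp (Polynomial.X + 1) - Q

lemma coeff_comp_X_add_one (Q : Polynomial R) (B : ℕ) (hB : Q.natDegree < B) (k : ℕ) :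
    (Q.comp (Polynomial.X + 1)).coeff k
      = ∑ n ∈ Finset.range B, Q.coeff n * (n.choose k : R) := by
  conv_lhs => rw [Q.as_sum_range' B hB]
  rw [Polynomial.sum_comp, Polynomial.finset_sum_coeff]
  refine Finset.sum_congr rfl fun n _ => ?_
  rw [Polynomial.monomial_comp, Polynomial.coeff_C_mul, Polynomial.coeff_X_add_one_pow]

lemma delta_coeff (Q : Polynomial R) (m : ℕ) (h : Q.natDegree ≤ m + 1) :
    (delta Q).coeff m = ((m + 1 : ℕ) : R) * Q.coeff (m + 1) := by
  rw [delta, Polynomial.coeff_sub, coeff_comp_X_add_one Q (m + 2) (by omega) m]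
  rw [Finset.sum_range_succ, Finset.sum_range_succ]
  have h1 : ∀ n ∈ Finset.range m, Q.coeff n * (n.choose m : R) = 0 := fun n hn => by
    rw [Nat.choose_eq_zero_of_lt (Finset.mem_range.mp hn), Nat.cast_zero, mul_zero]
  rw [Finset.sum_eq_zero h1, Nat.choose_self, Nat.choose_succ_self_right]
  push_cast
  ring

lemma delta_natDegree_le (Q : Polynomial R) (m : ℕ) (h : Q.natDegree ≤ m + 1) :
    (delta Q).natDegree ≤ m := by
  rw [Polynomial.natDegree_le_iff_coeff_eq_zero]
  intro k hk
  rw [delta, Polynomial.coeff_sub, coeff_comp_X_add_one Q (m + 2) (by omega) k]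
  have h1 : ∀ n ∈ Finset.range (m + 2), Q.coeff n * (n.choose k : R)
      = if n = k then Q.coeff k else 0 := by
    intro n hn
    have hn' := Finset.mem_range.mp hn
    rcases eq_or_ne n k with rfl | hne
    · simp
    · have hlt : n < k := by omega
      rw [Nat.choose_eq_zero_of_lt hlt, Nat.cast_zero, mul_zero, if_neg hne]
  rw [Finset.sum_congr rfl h1, Finset.sum_ite_eq' (Finset.range (m + 2)) k]
  by_cases hk2 : k ∈ Finset.range (m + 2)
  · rw [if_pos hk2, sub_self]
  · have hk3 : m + 2 ≤ k := by simpa [Finset.mem_range] using hk2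
    rw [if_neg hk2, Polynomial.coeff_eq_zero_of_natDegree_lt (by omega), sub_zero]

lemma delta_C (a : R) : delta (Polynomial.C a) = 0 := by
  simp [delta, Polynomial.C_comp]

lemma iter_delta_eq_C : ∀ (m : ℕ) (Q : Polynomial R), Q.natDegree ≤ m →
    delta^[m] Q = Polynomial.C ((m.factorial : R) * Q.coeff m)
  | 0, Q, h => by
    rw [Function.iterate_zero_apply, Nat.factorial_zero, Nat.cast_one, one_mul]
    exact Polynomial.eq_C_of_natDegree_le_zero h
  | (m + 1), Q, h => by
    rw [Function.iterate_succ_apply,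
      iter_delta_eq_C m (delta Q) (delta_natDegree_le Q m h), delta_coeff Q m h,
      Nat.factorial_succ]
    congr 1
    push_cast
    ring

lemma iter_delta_eq_zero (m : ℕ) (Q : Polynomial R) (h : Q.natDegree ≤ m) :
    delta^[m + 1] Q = 0 := by
  rw [Function.iterate_succ_apply', iter_delta_eq_C m Q h, delta_C]

/-- coefficient of a product at the sum of (bounds on) the degrees. -/
lemma coeff_prod_varying {ι : Type*} (s : Finset ι) (f : ι → Polynomial R) (n : ι → ℕ)
    (h : ∀ i ∈ s, (f i).natDegree ≤ n i) :
    (∏ i ∈ s, f i).coeff (∑ i ∈ s, n i) = ∏ i ∈ s, (f i).coeff (n i) := by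
  classical
  induction s using Finset.cons_induction with
  | empty => simp
  | cons a s ha ih =>
    rw [Finset.prod_cons, Finset.sum_cons, Finset.prod_cons,
      Polynomial.coeff_mul_add_eq_of_natDegree_le (h a (Finset.mem_cons_self a s))
        ((Polynomial.natDegree_prod_le _ _).trans
          (Finset.sum_le_sum fun i hi => h i (Finset.mem_cons_of_mem hi))),
      ih fun i hi => h i (Finset.mem_cons_of_mem hi)]

/-! ### The polynomial family interpolating `σ_i^k (u_{ev})` -/

variable {K : Type*} [Field K] {E : Type*}

/-- `fpoly K e c a` is the univariate polynomial (in an auxiliary variable `Y`,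
with coefficients in `MvPolynomial E K`) whose value at `Y = k` is
`σ_i^k (uev K e c)`, where `a = γ e i`. -/
noncomputable def fpoly (K : Type*) [Field K] {E : Type*} (e : E) (c : ℤ) (a : K) :
    Polynomial (MvPolynomial E K) :=
  if 0 < c then ∏ k ∈ Finset.range c.toNat,
    (Polynomial.C (X e) - Polynomial.X * Polynomial.C (C a) + Polynomial.C (C (k : K)))
  else ∏ m ∈ Finset.range (-c).toNat,
    (Polynomial.C (X e) - Polynomial.X * Polynomial.C (C a) - Polynomial.C (C ((m : K) + 1)))

lemma fpoly_eval_zero (e : E) (c : ℤ) (a : K) :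
    Polynomial.eval (0 : MvPolynomial E K) (fpoly K e c a) = uev K e c := by
  rw [fpoly, uev]
  split_ifs with h <;>
  · rw [Polynomial.eval_prod]
    refine Finset.prod_congr rfl fun k _ => ?_
    simp

lemma fpoly_zero (e : E) (c : ℤ) : fpoly K e c (0 : K) = Polynomial.C (uev K e c) := by
  rw [fpoly, uev]
  split_ifs with h <;>
  · rw [map_prod]
    refine Finset.prod_congr rfl fun k _ => ?_
    simp only [map_zero, mul_zero, sub_zero, map_add, map_sub]

lemma fpoly_natDegree_le (e : E) (c : ℤ) (a : K) :
    (fpoly K e c a).natDegree ≤ c.natAbs := by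
  have hfac : ∀ b u : MvPolynomial E K,
      (Polynomial.C b - Polynomial.X * Polynomial.C (C a) + Polynomial.C u).natDegree ≤ 1 := by
    intro b u
    compute_degree
  rw [fpoly]
  split_ifs with h
  · refine (Polynomial.natDegree_prod_le _ _).trans ?_
    refine (Finset.sum_le_sum fun k _ => hfac _ _).trans ?_
    simp only [Finset.sum_const, Finset.card_range, smul_eq_mul, mul_one]
    omega
  · refine (Polynomial.natDegree_prod_le _ _).trans ?_
    have hb : ∀ k ∈ Finset.range (-c).toNat,
        (Polynomial.C (X e) - Polynomial.X * Polynomial.C (C a)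
          - Polynomial.C (C ((k : K) + 1))).natDegree ≤ 1 := by
      intro k _
      rw [sub_eq_add_neg (Polynomial.C (X e) - Polynomial.X * Polynomial.C (C a)), ← map_neg]
      exact hfac _ _
    refine (Finset.sum_le_sum hb).trans ?_
    simp only [Finset.sum_const, Finset.card_range, smul_eq_mul, mul_one]
    omega

lemma fpoly_coeff (e : E) (c : ℤ) (a : K) :
    (fpoly K e c a).coeff c.natAbs = (-(C a : MvPolynomial E K)) ^ c.natAbs := by
  have hfac : ∀ b u : MvPolynomial E K,
      (Polynomial.C b - Polynomial.X * Polynomial.C (C a) + Polynomial.C u).coeff 1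
        = -(C a : MvPolynomial E K) := by
    intro b u
    simp [Polynomial.coeff_X_mul]
  have hdeg : ∀ b u : MvPolynomial E K,
      (Polynomial.C b - Polynomial.X * Polynomial.C (C a) + Polynomial.C u).natDegree ≤ 1 := by
    intro b u
    compute_degree
  rw [fpoly]
  split_ifs with h
  · have hsum : (∑ _k ∈ Finset.range c.toNat, 1) = c.natAbs := by
      simp only [Finset.sum_const, Finset.card_range, smul_eq_mul, mul_one]
      omega
    rw [← hsum, coeff_prod_varying _ _ _ (fun k _ => hdeg _ _)]
    rw [Finset.prod_congr rfl fun k (_ : k ∈ Finset.range c.toNat) => hfac _ _,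
      Finset.prod_const, Finset.card_range]
    congr 1
    omega
  · have hsum : (∑ _k ∈ Finset.range (-c).toNat, 1) = c.natAbs := by
      simp only [Finset.sum_const, Finset.card_range, smul_eq_mul, mul_one]
      omega
    have hre : ∀ k ∈ Finset.range (-c).toNat,
        (Polynomial.C (X e) - Polynomial.X * Polynomial.C (C a)
          - Polynomial.C (C ((k : K) + 1)))
        = Polynomial.C (X e) - Polynomial.X * Polynomial.C (C a)
          + Polynomial.C (-(C ((k : K) + 1))) := fun k _ => by
      rw [map_neg]; ring
    rw [Finset.prod_congr rfl hre, ← hsum,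
      coeff_prod_varying _ _ _ (fun k _ => hdeg _ _)]
    rw [Finset.prod_congr rfl fun k (_ : k ∈ Finset.range (-c).toNat) => hfac _ _,
      Finset.prod_const, Finset.card_range]
    congr 1
    omega

lemma X_add_C_ne_zero (e : E) (a : K) : (X e + C a : MvPolynomial E K) ≠ 0 := by
  classical
  intro h
  have h2 := congrArg (MvPolynomial.coeff (Finsupp.single e 1)) h
  rw [MvPolynomial.coeff_add, MvPolynomial.coeff_X, MvPolynomial.coeff_zero,
    MvPolynomial.coeff_C] at h2
  rw [if_neg (fun hh : (0 : E →₀ ℕ) = _ =>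
    one_ne_zero (Finsupp.single_eq_zero.mp hh.symm))] at h2
  simpa using h2

lemma uev_ne_zero (e : E) (c : ℤ) : uev K e c ≠ 0 := by
  rw [uev]
  split_ifs with h
  · exact Finset.prod_ne_zero_iff.mpr fun k _ => X_add_C_ne_zero e _
  · refine Finset.prod_ne_zero_iff.mpr fun m _ => ?_
    rw [sub_eq_add_neg, ← map_neg]
    exact X_add_C_ne_zero e _

/-- Applying `σ_i` to the value of the interpolating polynomial at a fixed point `x`
gives the value at `x + 1`. -/
lemma sigma_eval [Fintype E] (σi : MvPolynomial E K ≃ₐ[K] MvPolynomial E K) (b : E → K)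
    (hσ : ∀ e, σi (X e) = X e - C (b e)) (c : E → ℤ)
    (x : MvPolynomial E K) (hx : σi x = x) :
    σi (Polynomial.eval x (∏ e : E, fpoly K e (c e) (b e)))
      = Polynomial.eval (x + 1) (∏ e : E, fpoly K e (c e) (b e)) := by
  have hC : ∀ y : K, σi (C y) = (C y : MvPolynomial E K) := fun y => by
    rw [← MvPolynomial.algebraMap_eq]
    exact σi.commutes y
  rw [Polynomial.eval_prod, Polynomial.eval_prod, map_prod]
  refine Finset.prod_congr rfl fun e _ => ?_
  rw [fpoly]
  split_ifs with h
  · rw [Polynomial.eval_prod, Polynomial.eval_prod, map_prod]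
    refine Finset.prod_congr rfl fun k _ => ?_
    simp only [Polynomial.eval_add, Polynomial.eval_sub, Polynomial.eval_mul,
      Polynomial.eval_C, Polynomial.eval_X, map_add, map_sub, map_mul, hσ, hx, hC]
    ring
  · rw [Polynomial.eval_prod, Polynomial.eval_prod, map_prod]
    refine Finset.prod_congr rfl fun k _ => ?_
    simp only [Polynomial.eval_add, Polynomial.eval_sub, Polynomial.eval_mul,
      Polynomial.eval_C, Polynomial.eval_X, map_add, map_sub, map_mul, hσ, hx, hC]
    ring

end TGWAux

open TGWAux in
/-- Let `i ≠ j` and `N = Σ_{e : γ e i ≠ 0} |γ e j|`.  Then `(σ_i − id)^{N+1}(t_j) = 0`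
while `(σ_i − id)^{N}(t_j) ≠ 0`; equivalently, the minimal polynomial of `σ_i`
acting on `span_K {σ_i^k(t_j)}` is `(x−1)^{N+1}`. -/
theorem sigma_sub_id_pow_tj {K V E : Type*} [Field K] [CharZero K] [Fintype V] [Fintype E]
    [DecidableEq V]
    (γ : E → V → ℤ) (hM : CondM γ)
    (σ : V → (MvPolynomial E K ≃ₐ[K] MvPolynomial E K))
    (hσ : ∀ (v : V) (e : E), σ v (X e) = X e - C ((γ e v : ℤ) : K))
    (i j : V) (hij : i ≠ j)
    (N : ℕ) (hN : N = ∑ e ∈ Finset.univ.filter (fun e : E => γ e i ≠ 0), (γ e j).natAbs)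
    (D : Module.End K (MvPolynomial E K))
    (hD : D = (σ i : MvPolynomial E K ≃ₗ[K] MvPolynomial E K).toLinearMap - LinearMap.id) :
    (D ^ (N + 1)) (tGamma K γ j) = 0 ∧ (D ^ N) (tGamma K γ j) ≠ 0 := by
  classical
  set T : Polynomial (MvPolynomial E K) :=
    ∏ e : E, fpoly K e (γ e j) ((γ e i : ℤ) : K) with hT
  set w : E → ℕ := fun e => if γ e i = 0 then 0 else (γ e j).natAbs with hw
  have hdeg_e : ∀ e : E, (fpoly K e (γ e j) ((γ e i : ℤ) : K)).natDegree ≤ w e := by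
    intro e
    by_cases h0 : γ e i = 0
    · have hwe : w e = 0 := by simp [hw, h0]
      rw [hwe, h0, Int.cast_zero, fpoly_zero, Polynomial.natDegree_C]
    · have hwe : w e = (γ e j).natAbs := by simp [hw, h0]
      rw [hwe]
      exact fpoly_natDegree_le e (γ e j) _
  have hNw : N = ∑ e : E, w e := by
    rw [hN, Finset.sum_filter]
    exact Finset.sum_congr rfl fun e _ => by by_cases h : γ e i = 0 <;> simp [hw, h]
  have hdegT : T.natDegree ≤ N := by
    rw [hNw]
    exact (Polynomial.natDegree_prod_le _ _).trans (Finset.sum_le_sum fun e _ => hdeg_e e)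
  have hcoeff : T.coeff N ≠ 0 := by
    rw [hT, hNw, coeff_prod_varying _ _ _ (fun e _ => hdeg_e e)]
    refine Finset.prod_ne_zero_iff.mpr fun e _ => ?_
    by_cases h0 : γ e i = 0
    · have hwe : w e = 0 := by simp [hw, h0]
      rw [hwe, h0, Int.cast_zero, fpoly_zero, Polynomial.coeff_C_zero]
      exact uev_ne_zero e _
    · have hwe : w e = (γ e j).natAbs := by simp [hw, h0]
      rw [hwe, fpoly_coeff]
      refine pow_ne_zero _ (neg_ne_zero.mpr ?_)
      rw [Ne, MvPolynomial.C_eq_zero]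
      exact_mod_cast h0
  have key : ∀ m k : ℕ, (D ^ m) (Polynomial.eval ((k : ℕ) : MvPolynomial E K) T)
      = Polynomial.eval ((k : ℕ) : MvPolynomial E K) (delta^[m] T) := by
    intro m
    induction m with
    | zero => intro k; simp
    | succ m ih =>
      intro k
      rw [pow_succ, Module.End.mul_apply]
      have hDapp : D (Polynomial.eval ((k : ℕ) : MvPolynomial E K) T)
          = Polynomial.eval (((k + 1 : ℕ) : ℕ) : MvPolynomial E K) T
            - Polynomial.eval ((k : ℕ) : MvPolynomial E K) T := by
        rw [hD, LinearMap.sub_apply, LinearMap.id_apply]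
        congr 1
        have hs := sigma_eval (σ i) (fun e => ((γ e i : ℤ) : K)) (fun e => hσ i e)
          (fun e => γ e j) ((k : ℕ) : MvPolynomial E K) (map_natCast (σ i) k)
        rw [← hT] at hs
        rw [show ((σ i : MvPolynomial E K ≃ₗ[K] MvPolynomial E K).toLinearMap)
            (Polynomial.eval ((k : ℕ) : MvPolynomial E K) T)
            = σ i (Polynomial.eval ((k : ℕ) : MvPolynomial E K) T) from rfl, hs]
        push_cast
        ring_nf
      rw [hDapp, map_sub, ih, ih, Function.iterate_succ_apply', delta,
        Polynomial.eval_sub, Polynomial.eval_comp, Polynomial.eval_add,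
        Polynomial.eval_X, Polynomial.eval_one]
      push_cast
      ring_nf
  have hbase : Polynomial.eval (((0 : ℕ) : ℕ) : MvPolynomial E K) T = tGamma K γ j := by
    rw [Nat.cast_zero, Polynomial.eval_prod, tGamma]
    exact Finset.prod_congr rfl fun e _ => fpoly_eval_zero e _ _
  constructor
  · have hk := key (N + 1) 0
    rw [hbase] at hk
    rw [hk, iter_delta_eq_zero N T hdegT, Polynomial.eval_zero]
  · have hk := key N 0
    rw [hbase] at hk
    rw [hk, iter_delta_eq_C N T hdegT, Polynomial.eval_C]
    refine mul_ne_zero ?_ hcoeff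
    rw [show ((N.factorial : ℕ) : MvPolynomial E K) = C ((N.factorial : ℕ) : K) from
      (map_natCast (C : K →+* MvPolynomial E K) _).symm, Ne, MvPolynomial.C_eq_zero]
    exact Nat.cast_ne_zero.mpr N.factorial_ne_zero
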